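/- arXiv:1603.03456 — 2 statements merged into one kernel-verified Lean document; each statement's English description precedes it below -/
import Mathlib

section
/- Let G be a group, H ≤ G a subgroup of finite index, V a finite-dimensional complex vector space with a representation ρ : H → GL(V), and g ∈ G. Suppose there exists an integer k ≥ 1 such that for every x ∈ G and every integer m ≥ 1 with x⁻¹ g^m x ∈ H, one has ρ(x⁻¹ g^m x)^k = 1. Then the linear action of g on the induced representation Ind_H^G V = ℂ[G] ⊗_{ℂ[H]} V has finite order, i.e., there exists N ≥ 1 such that g^N acts as the identity on ℂ[G] ⊗_{ℂ[H]} V. -/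
open TensorProduct

/-- The submodule of `ℂ[G] ⊗[ℂ] V` spanned by the balancing relations
`(a * h) ⊗ v - a ⊗ (ρ h v)` for `a ∈ ℂ[G]`, `h ∈ H`, `v ∈ V`.  The quotient by this
submodule is the induced representation `Ind_H^G V = ℂ[G] ⊗_{ℂ[H]} V`. -/
noncomputable def indRel (G : Type*) [Group G] (H : Subgroup G)
    (V : Type*) [AddCommGroup V] [Module ℂ V] (ρ : Representation ℂ H V) :
    Submodule ℂ (MonoidAlgebra ℂ G ⊗[ℂ] V) :=
  Submodule.span ℂ { x | ∃ (a : MonoidAlgebra ℂ G) (h : H) (v : V),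
    x = (a * MonoidAlgebra.of ℂ G (h : G)) ⊗ₜ[ℂ] v - a ⊗ₜ[ℂ] (ρ h v) }

/-- The (ℂ-linear) action of `g ∈ G` on `ℂ[G] ⊗[ℂ] V`, by left multiplication on the first
tensor factor; it descends to the action of `g` on the induced representation
`ℂ[G] ⊗_{ℂ[H]} V`. -/
noncomputable def indAct (G : Type*) [Group G]
    (V : Type*) [AddCommGroup V] [Module ℂ V] (g : G) :
    MonoidAlgebra ℂ G ⊗[ℂ] V →ₗ[ℂ] MonoidAlgebra ℂ G ⊗[ℂ] V :=
  TensorProduct.map (LinearMap.mulLeft ℂ (MonoidAlgebra.of ℂ G g)) LinearMap.id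

/-!
Some power `g ^ m` lies in the normal core of `H`, so every conjugate of `g ^ (m * k)` is the
`k`-th power of a conjugate of `g ^ m` lying in `H`, hence lies in `ker ρ`. An element `g` all of
whose conjugates lie in `ker ρ` acts trivially on `ℂ[G] ⊗_{ℂ[H]} V`, because
`g y ⊗ v = y (y⁻¹ g y) ⊗ v = y ⊗ ρ (y⁻¹ g y) v = y ⊗ v`.
-/

theorem Subgroup.exists_pos_pow_conj_mem {G : Type*} [Group G] (H : Subgroup G) [H.FiniteIndex]
    (g : G) : ∃ m : ℕ, 0 < m ∧ ∀ x : G, x⁻¹ * g ^ m * x ∈ H :=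
  ⟨H.normalCore.index, Nat.pos_of_ne_zero Subgroup.FiniteIndex.index_ne_zero, fun x =>
    H.normalCore_le (H.normalCore_normal.conj_mem' _ (H.normalCore.pow_index_mem g) x)⟩

section Induced

variable {G : Type*} [Group G] {H : Subgroup G}
  {V : Type*} [AddCommGroup V] [Module ℂ V] {ρ : Representation ℂ H V}

theorem indRel_mk_mul_of_mem_ker {h : H} (hh : h ∈ ρ.ker) (a : MonoidAlgebra ℂ G) (v : V) :
    (Submodule.Quotient.mk ((a * MonoidAlgebra.of ℂ G h) ⊗ₜ[ℂ] v) :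
        (MonoidAlgebra ℂ G ⊗[ℂ] V) ⧸ indRel G H V ρ) =
      Submodule.Quotient.mk (a ⊗ₜ[ℂ] v) := by
  rw [Submodule.Quotient.eq]
  have hrel : (a * MonoidAlgebra.of ℂ G h) ⊗ₜ[ℂ] v - a ⊗ₜ[ℂ] ρ h v ∈ indRel G H V ρ :=
    Submodule.subset_span ⟨a, h, v, rfl⟩
  simpa [MonoidHom.mem_ker.mp hh] using hrel

theorem indRel_mkQ_comp_indAct_of_mem_normalCore {g : G}
    (hg : g ∈ (ρ.ker.map H.subtype).normalCore) :
    (indRel G H V ρ).mkQ ∘ₗ indAct G V g = (indRel G H V ρ).mkQ := by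
  ext y v
  obtain ⟨h, hker, hh⟩ := Subgroup.mem_map.mp (hg y⁻¹)
  have hcomm : g * y = y * h := by
    rw [show (h : G) = y⁻¹ * g * y by simpa using hh]
    group
  simpa [indAct, hcomm] using indRel_mk_mul_of_mem_ker hker (MonoidAlgebra.single y 1) v

end Induced

theorem induced_rep_finite_order_of_conjugates_bounded_order_general
    (G : Type*) [Group G] (H : Subgroup G) [H.FiniteIndex]
    (V : Type*) [AddCommGroup V] [Module ℂ V]
    (ρ : Representation ℂ H V) (g : G) (k : ℕ) (hk : 1 ≤ k)
    (hconj : ∀ (x : G) (m : ℕ), 1 ≤ m → ∀ hx : x⁻¹ * g ^ m * x ∈ H,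
      ρ ⟨x⁻¹ * g ^ m * x, hx⟩ ^ k = 1) :
    ∃ N : ℕ, 1 ≤ N ∧
      ∀ x : MonoidAlgebra ℂ G ⊗[ℂ] V,
        (Submodule.Quotient.mk (indAct G V (g ^ N) x) :
            (MonoidAlgebra ℂ G ⊗[ℂ] V) ⧸ indRel G H V ρ) =
          Submodule.Quotient.mk x := by
  obtain ⟨m, hm, hmH⟩ := H.exists_pos_pow_conj_mem g
  have hconj_mem : ∀ x : G, x⁻¹ * g ^ (m * k) * x ∈ ρ.ker.map H.subtype := fun x =>
    ⟨⟨x⁻¹ * g ^ m * x, hmH x⟩ ^ k,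
      by simp only [SetLike.mem_coe, MonoidHom.mem_ker, map_pow, hconj x m hm (hmH x)],
      by simpa [pow_mul] using (map_pow (MulAut.conj x⁻¹) (g ^ m) k).symm⟩
  have hmem : g ^ (m * k) ∈ (ρ.ker.map H.subtype).normalCore := fun y => by
    simpa using hconj_mem y⁻¹
  exact ⟨m * k, Nat.one_le_iff_ne_zero.mpr (by positivity),
    LinearMap.congr_fun (indRel_mkQ_comp_indAct_of_mem_normalCore hmem)⟩

/-- Let `H ≤ G` be a subgroup of finite index, `V` a finite dimensional complex representation
of `H`, and `g ∈ G`.  If there is `k ≥ 1` such that every conjugate power `x⁻¹ g^m x` (`m ≥ 1`)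
of `g` which lies in `H` satisfies `ρ(x⁻¹ g^m x)^k = 1`, then `g` acts with finite order on the
induced representation `Ind_H^G V = ℂ[G] ⊗_{ℂ[H]} V`: there is `N ≥ 1` such that `g ^ N` acts
as the identity on `ℂ[G] ⊗_{ℂ[H]} V`. -/
theorem induced_rep_finite_order_of_conjugates_bounded_order
    (G : Type*) [Group G] (H : Subgroup G) [H.FiniteIndex]
    (V : Type*) [AddCommGroup V] [Module ℂ V] [FiniteDimensional ℂ V]
    (ρ : Representation ℂ H V) (g : G) (k : ℕ) (hk : 1 ≤ k)
    (hconj : ∀ (x : G) (m : ℕ), 1 ≤ m → ∀ hx : x⁻¹ * g ^ m * x ∈ H,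
      ρ ⟨x⁻¹ * g ^ m * x, hx⟩ ^ k = 1) :
    ∃ N : ℕ, 1 ≤ N ∧
      ∀ x : MonoidAlgebra ℂ G ⊗[ℂ] V,
        (Submodule.Quotient.mk (indAct G V (g ^ N) x) :
            (MonoidAlgebra ℂ G ⊗[ℂ] V) ⧸ indRel G H V ρ) =
          Submodule.Quotient.mk x :=
  induced_rep_finite_order_of_conjugates_bounded_order_general G H V ρ g k hk hconj
end

section
/- For every g ≥ 1, the genus-g surface group π₁(S_g) is torsion-free: if γ ∈ π₁(S_g) satisfies γ^n = 1 for some integer n ≥ 1, then γ = 1. -/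
/-!
Cutting the surface along `a₁` exhibits `π₁(S_g)` as an HNN extension of the free group on
`b₁, a₂, b₂, …, a_g, b_g`: the relator says exactly that the stable letter `a₁` conjugates `b₁`
to `([a₂,b₂]⋯[a_g,b_g])⁻¹ b₁`, and both elements generate infinite cyclic subgroups. An HNN
extension of a torsion-free group is torsion-free: every element is conjugate either into the
base group or to a cyclically reduced word, and the powers of a nonempty cyclically reduced word
are reduced words, hence nontrivial by Britton's lemma.
-/

/-- The standard surface relator `[a₁,b₁]⋯[a_g,b_g]` in the free group on the `2g`
generators `aᵢ = (i, false)` and `bᵢ = (i, true)`. -/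
def surfaceRelator (g : ℕ) : FreeGroup (Fin g × Bool) :=
  (List.ofFn (fun i : Fin g =>
    FreeGroup.of (i, false) * FreeGroup.of (i, true) *
      (FreeGroup.of (i, false))⁻¹ * (FreeGroup.of (i, true))⁻¹)).prod

/-- The genus-`g` surface group
`π₁(S_g) = ⟨a₁, b₁, …, a_g, b_g ∣ [a₁,b₁]⋯[a_g,b_g]⟩`. -/
abbrev SurfaceGroup (g : ℕ) : Type :=
  PresentedGroup ({surfaceRelator g} : Set (FreeGroup (Fin g × Bool)))

theorem List.isChain_flatten_replicate {α : Type*} {R : α → α → Prop} {l : List α}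
    (hl : l ≠ []) (hR : l.IsChain R) (hseam : ∀ a ∈ l.getLast?, ∀ b ∈ l.head?, R a b) (n : ℕ) :
    (List.replicate n l).flatten.IsChain R := by
  rw [List.isChain_flatten (by simp [List.mem_replicate, hl.symm])]
  exact ⟨fun l' hl' => (List.eq_of_mem_replicate hl') ▸ hR,
    List.isChain_replicate_of_rel n hseam⟩

theorem injective_zpowersHom {G : Type*} [Group G] {x : G} (hx : ¬IsOfFinOrder x) :
    Function.Injective (zpowersHom G x) :=
  fun a b hab => Multiplicative.toAdd.injective
    (injective_zpow_iff_not_isOfFinOrder.2 hx (by simpa using hab))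

noncomputable def zpowersEquivOfNotIsOfFinOrder {G H : Type*} [Group G] [Group H] {x : G}
    {y : H} (hx : ¬IsOfFinOrder x) (hy : ¬IsOfFinOrder y) :
    Subgroup.zpowers x ≃* Subgroup.zpowers y :=
  ((MulEquiv.subgroupCongr (Subgroup.range_zpowersHom x)).symm.trans
      (MonoidHom.ofInjective (injective_zpowersHom hx)).symm).trans
    ((MonoidHom.ofInjective (injective_zpowersHom hy)).trans
      (MulEquiv.subgroupCongr (Subgroup.range_zpowersHom y)))

theorem zpowersEquivOfNotIsOfFinOrder_apply_self {G H : Type*} [Group G] [Group H] {x : G}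
    {y : H} (hx : ¬IsOfFinOrder x) (hy : ¬IsOfFinOrder y) :
    zpowersEquivOfNotIsOfFinOrder hx hy ⟨x, Subgroup.mem_zpowers x⟩ =
      ⟨y, Subgroup.mem_zpowers y⟩ := by
  have hx1 : (MulEquiv.subgroupCongr (Subgroup.range_zpowersHom x)).symm
      ⟨x, Subgroup.mem_zpowers x⟩ =
      MonoidHom.ofInjective (injective_zpowersHom hx) (Multiplicative.ofAdd 1) := by
    ext; simp [MonoidHom.ofInjective_apply]
  simp only [zpowersEquivOfNotIsOfFinOrder, MulEquiv.trans_apply, hx1, MulEquiv.symm_apply_apply]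
  ext; simp [MonoidHom.ofInjective_apply]

namespace HNNExtension

open NormalWord

variable {G : Type*} [Group G] {A B : Subgroup G} (φ : A ≃* B)

variable (A B) in
/-- Consecutive letters `t^u g` and `t^v h` do not form a pinch `t^u g t^(-u)` with
`g ∈ toSubgroup A B u`; since `u, v = ±1`, this is Mathlib's condition on reduced words. -/
def NoPinch (a b : ℤˣ × G) : Prop :=
  a.2 ∈ toSubgroup A B a.1 → a.1 = b.1

variable (A B) in
def IsCyclicallyReduced (l : List (ℤˣ × G)) : Prop :=
  l.IsChain (NoPinch A B) ∧ ∀ a ∈ l.getLast?, ∀ b ∈ l.head?, NoPinch A B a b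

def wordProd (l : List (ℤˣ × G)) : HNNExtension G A B φ :=
  (l.map fun x => t ^ (x.1 : ℤ) * of x.2).prod

@[simp]
theorem wordProd_nil : wordProd φ ([] : List (ℤˣ × G)) = 1 := rfl

@[simp]
theorem wordProd_cons (x : ℤˣ × G) (l : List (ℤˣ × G)) :
    wordProd φ (x :: l) = t ^ (x.1 : ℤ) * of x.2 * wordProd φ l := by
  simp [wordProd]

@[simp]
theorem wordProd_append (l₁ l₂ : List (ℤˣ × G)) :
    wordProd φ (l₁ ++ l₂) = wordProd φ l₁ * wordProd φ l₂ := by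
  simp [wordProd]

theorem wordProd_flatten_replicate (l : List (ℤˣ × G)) (n : ℕ) :
    wordProd φ (List.replicate n l).flatten = wordProd φ l ^ n := by
  simp [wordProd, List.map_flatten, List.prod_flatten, List.map_replicate]

theorem t_zpow_mul_of_mul_t_zpow_neg (u : ℤˣ) {a : G} (ha : a ∈ toSubgroup A B u) :
    (t ^ (u : ℤ) * of a * t ^ (-(u : ℤ)) : HNNExtension G A B φ) =
      of (toSubgroupEquiv φ u ⟨a, ha⟩ : G) := by
  rcases Int.units_eq_one_or u with rfl | rfl
  · simp only [Units.val_one, zpow_one, zpow_neg]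
    exact (equiv_eq_conj (φ := φ) ⟨a, ha⟩).symm
  · simp only [Units.val_neg, Units.val_one, Int.reduceNeg, zpow_neg, zpow_ofNat, pow_one,
      neg_neg, toSubgroup_neg_one, toSubgroupEquiv_neg_one]
    exact (equiv_symm_eq_conj (φ := φ) ⟨a, ha⟩).symm

/-- Britton's lemma, applied to the reduced word obtained by repeating `l`. -/
theorem wordProd_pow_ne_one {l : List (ℤˣ × G)} (hl : l ≠ [])
    (hcyc : IsCyclicallyReduced A B l) {n : ℕ} (hn : n ≠ 0) : wordProd φ l ^ n ≠ 1 := by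
  intro h
  let w : ReducedWord G A B :=
    ⟨1, (List.replicate n l).flatten, List.isChain_flatten_replicate hl hcyc.1 hcyc.2 n⟩
  have hw : w.prod φ = of 1 := by
    change of 1 * wordProd φ _ = _
    rw [wordProd_flatten_replicate, h, mul_one]
  have := ReducedWord.toList_eq_nil_of_mem_of_range φ w ⟨1, hw.symm⟩
  simp [w, hl, hn] at this

theorem isConj_of_mul_wordProd_concat (g : G) (l : List (ℤˣ × G)) (p : ℤˣ × G) :
    IsConj (of g * wordProd φ (l ++ [p])) (wordProd φ (l ++ [(p.1, p.2 * g)])) :=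
  isConj_iff.2 ⟨(of g)⁻¹, by simp [mul_assoc]⟩

theorem isConj_wordProd_of_pinch (x y : ℤˣ × G) (l : List (ℤˣ × G))
    (hy : y.2 ∈ toSubgroup A B y.1) (hxy : x.1 = -y.1) :
    IsConj (wordProd φ (x :: l ++ [y]))
      (of ((toSubgroupEquiv φ y.1 ⟨y.2, hy⟩ : G) * x.2) * wordProd φ l) := by
  refine isConj_iff.2 ⟨t ^ (y.1 : ℤ) * of y.2, ?_⟩
  rw [map_mul, ← t_zpow_mul_of_mul_t_zpow_neg φ y.1 hy]
  simp only [List.cons_append, wordProd_cons, wordProd_append, wordProd_nil, hxy, Units.val_neg]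
  group

theorem isChain_concat_of_fst_eq {l : List (ℤˣ × G)} {p q : ℤˣ × G} (hpq : p.1 = q.1)
    (hl : (l ++ [p]).IsChain (NoPinch A B)) : (l ++ [q]).IsChain (NoPinch A B) := by
  rw [List.isChain_append] at hl ⊢
  refine ⟨hl.1, List.isChain_singleton q, fun a ha b hb => ?_⟩
  obtain rfl : q = b := by simpa using hb
  simpa [NoPinch, hpq] using hl.2.2 a ha p (by simp)

theorem exists_isConj_of_or_isCyclicallyReduced (g : G) (l : List (ℤˣ × G))
    (hl : l.IsChain (NoPinch A B)) :
    (∃ c, IsConj (of g * wordProd φ l) (of c)) ∨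
      ∃ M ≠ [], IsCyclicallyReduced A B M ∧ IsConj (of g * wordProd φ l) (wordProd φ M) := by
  induction hlen : l.length using Nat.strong_induction_on generalizing g l with
  | _ k ih =>
  rcases l.eq_nil_or_concat' with rfl | ⟨l', p, rfl⟩
  · exact .inl ⟨g, by rw [wordProd_nil, mul_one]⟩
  set q : ℤˣ × G := (p.1, p.2 * g)
  have hconj := isConj_of_mul_wordProd_concat φ g l' p
  have hM : (l' ++ [q]).IsChain (NoPinch A B) := isChain_concat_of_fst_eq (p := p) rfl hl
  by_cases hseam : ∀ a ∈ (l' ++ [q]).getLast?, ∀ b ∈ (l' ++ [q]).head?, NoPinch A B a b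
  · exact .inr ⟨l' ++ [q], by simp, ⟨hM, hseam⟩, hconj⟩
  -- The last and first letters form a pinch; cancelling it shortens the word by two letters.
  obtain ⟨x, l'', rfl⟩ : ∃ x l'', l' = x :: l'' := by
    cases l' with
    | nil => simp [NoPinch] at hseam
    | cons x l'' => exact ⟨x, l'', rfl⟩
  rw [List.getLast?_concat, List.cons_append, List.head?_cons] at hseam
  simp only [Option.mem_def, Option.some.injEq, forall_eq', NoPinch, Classical.not_imp] at hseam
  obtain ⟨hq, hqx⟩ := hseam
  have hpinch := isConj_wordProd_of_pinch φ x q l'' hq (Int.units_ne_iff_eq_neg.1 (Ne.symm hqx))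
  have hl'' : l''.IsChain (NoPinch A B) := (List.isChain_append.1 (List.isChain_cons.1 hM).2).1
  rcases ih l''.length (by simp [← hlen]) _ l'' hl'' rfl with ⟨c, hc⟩ | ⟨M, hM, hcyc, hc⟩
  · exact .inl ⟨c, hconj.trans (hpinch.trans hc)⟩
  · exact .inr ⟨M, hM, hcyc, hconj.trans (hpinch.trans hc)⟩

theorem exists_reducedWord_prod_eq (x : HNNExtension G A B φ) :
    ∃ w : ReducedWord G A B, w.prod φ = x := by
  obtain ⟨d⟩ := TransversalPair.nonempty G A B
  exact ⟨(x • (NormalWord.empty : NormalWord d)).toReducedWord, by simp⟩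

theorem eq_one_of_isOfFinOrder (hG : ∀ g : G, IsOfFinOrder g → g = 1)
    {x : HNNExtension G A B φ} (hx : IsOfFinOrder x) : x = 1 := by
  obtain ⟨w, rfl⟩ := exists_reducedWord_prod_eq φ x
  rcases exists_isConj_of_or_isCyclicallyReduced φ w.head w.toList w.chain with
    ⟨c, hc⟩ | ⟨M, hM, hcyc, hc⟩
  · have hc1 : c = 1 := hG c ((of_injective (φ := φ)).isOfFinOrder_iff.1 (hc.isOfFinOrder hx))
    rwa [hc1, map_one, isConj_one_left] at hc
  · obtain ⟨n, hn, hpow⟩ := isOfFinOrder_iff_pow_eq_one.1 (hc.isOfFinOrder hx)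
    exact absurd hpow (wordProd_pow_ne_one φ hM hcyc hn.ne')

end HNNExtension

open scoped commutatorElement

theorem lift_surfaceRelator_succ {H : Type*} [Group H] (m : ℕ) (f : Fin (m + 1) × Bool → H) :
    FreeGroup.lift f (surfaceRelator (m + 1)) =
      ⁅f (0, false), f (0, true)⁆ *
        FreeGroup.lift (fun p : Fin m × Bool => f (p.1.succ, p.2)) (surfaceRelator m) := by
  simp [surfaceRelator, List.ofFn_succ, map_list_prod, List.map_ofFn, Function.comp_def,
    commutatorElement_def]

namespace SurfaceGroup

open HNNExtension

variable (m : ℕ)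

/-- The free group on `b₁, a₂, b₂, …, a_{m+1}, b_{m+1}`: `none` stands for `b₁` and
`some (i, s)` for the generator `(i + 1, s)` of `SurfaceGroup (m + 1)`. -/
abbrev Base : Type := FreeGroup (Option (Fin m × Bool))

def innerRelator : Base m := FreeGroup.map some (surfaceRelator m)

/-- What `a₁ b₁ a₁⁻¹` has to be by the surface relation. -/
def conjB : Base m := (innerRelator m)⁻¹ * FreeGroup.of none

theorem innerRelator_mul_conjB : innerRelator m * conjB m = FreeGroup.of none :=
  mul_inv_cancel_left _ _

theorem not_isOfFinOrder_of_none : ¬IsOfFinOrder (FreeGroup.of none : Base m) :=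
  not_isOfFinOrder_of_isMulTorsionFree (FreeGroup.of_ne_one _)

theorem not_isOfFinOrder_conjB : ¬IsOfFinOrder (conjB m) := by
  refine not_isOfFinOrder_of_isMulTorsionFree fun h => ?_
  let ψ : Base m →* Multiplicative ℤ := FreeGroup.lift (Option.elim · (.ofAdd 1) fun _ => 1)
  have hψ : ψ (innerRelator m) = 1 :=
    DFunLike.congr_fun (FreeGroup.ext_hom (f := ψ.comp (FreeGroup.map some)) (g := 1)
      fun _ => rfl) (surfaceRelator m)
  have := congrArg ψ h
  simp [conjB, hψ, ψ] at this

noncomputable def stableIso :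
    Subgroup.zpowers (FreeGroup.of none : Base m) ≃* Subgroup.zpowers (conjB m) :=
  zpowersEquivOfNotIsOfFinOrder (not_isOfFinOrder_of_none m) (not_isOfFinOrder_conjB m)

theorem stableIso_apply_self :
    stableIso m ⟨FreeGroup.of none, Subgroup.mem_zpowers _⟩ =
      ⟨conjB m, Subgroup.mem_zpowers _⟩ :=
  zpowersEquivOfNotIsOfFinOrder_apply_self _ _

theorem stableIso_apply_zpow (k : ℤ) :
    (stableIso m ⟨FreeGroup.of none ^ k, Subgroup.zpow_mem_zpowers _ _⟩ : Base m) =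
      conjB m ^ k := by
  have : (⟨FreeGroup.of none ^ k, Subgroup.zpow_mem_zpowers _ _⟩ :
      Subgroup.zpowers (FreeGroup.of none : Base m)) =
      ⟨FreeGroup.of none, Subgroup.mem_zpowers _⟩ ^ k :=
    rfl
  rw [this, map_zpow, stableIso_apply_self]
  rfl

abbrev HNNModel : Type :=
  HNNExtension (Base m) (Subgroup.zpowers (FreeGroup.of none)) (Subgroup.zpowers (conjB m))
    (stableIso m)

noncomputable def toHNNGen : Fin (m + 1) × Bool → HNNModel m := fun p =>
  Fin.cases (motive := fun _ => Bool → HNNModel m)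
    (fun s => bif s then of (FreeGroup.of none) else t)
    (fun i s => of (FreeGroup.of (some (i, s)))) p.1 p.2

theorem t_mul_of_none_mul_t_inv :
    (t * of (FreeGroup.of none) * t⁻¹ : HNNModel m) = of (conjB m) := by
  rw [← equiv_eq_conj (φ := stableIso m) ⟨_, Subgroup.mem_zpowers _⟩, stableIso_apply_self]

theorem lift_toHNNGen_surfaceRelator :
    FreeGroup.lift (toHNNGen m) (surfaceRelator (m + 1)) = 1 := by
  have hinner : FreeGroup.lift (fun p : Fin m × Bool => toHNNGen m (p.1.succ, p.2))
      (surfaceRelator m) = of (innerRelator m) :=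
    (FreeGroup.lift_unique ((of : Base m →* HNNModel m).comp (FreeGroup.map some))
      fun _ => rfl).symm
  rw [lift_surfaceRelator_succ, hinner, commutatorElement_def]
  change t * of (FreeGroup.of none) * t⁻¹ * (of (FreeGroup.of none))⁻¹ * of (innerRelator m) = 1
  have h : (of (innerRelator m) * of (conjB m) : HNNModel m) = of (FreeGroup.of none) := by
    rw [← map_mul, innerRelator_mul_conjB]
  rw [t_mul_of_none_mul_t_inv, ← h]
  group

noncomputable def toHNN : SurfaceGroup (m + 1) →* HNNModel m :=
  PresentedGroup.toGroup fun _ hr => (Set.mem_singleton_iff.1 hr) ▸ lift_toHNNGen_surfaceRelator m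

noncomputable def baseToSurface : Base m →* SurfaceGroup (m + 1) :=
  FreeGroup.lift fun o =>
    o.elim (PresentedGroup.of (0, true)) fun p => PresentedGroup.of (p.1.succ, p.2)

theorem conj_baseToSurface_of_none :
    PresentedGroup.of (0, false) * baseToSurface m (FreeGroup.of none) *
      (PresentedGroup.of (0, false))⁻¹ = baseToSurface m (conjB m) := by
  have hrel : FreeGroup.lift (PresentedGroup.of (rels := {surfaceRelator (m + 1)}))
      (surfaceRelator (m + 1)) = 1 :=
    (FreeGroup.lift_unique (PresentedGroup.mk _) fun _ => rfl).symm.trans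
      (PresentedGroup.one_of_mem (Set.mem_singleton _))
  have hinner : FreeGroup.lift (fun p : Fin m × Bool => PresentedGroup.of (p.1.succ, p.2))
      (surfaceRelator m) = baseToSurface m (innerRelator m) :=
    (FreeGroup.lift_unique ((baseToSurface m).comp (FreeGroup.map some)) fun _ => rfl).symm
  rw [lift_surfaceRelator_succ, hinner, commutatorElement_def] at hrel
  rw [conjB, map_mul, map_inv, ← eq_inv_of_mul_eq_one_left hrel]
  simp only [FreeGroup.lift_apply_of, baseToSurface, Option.elim_none]
  group

noncomputable def ofHNN : HNNModel m →* SurfaceGroup (m + 1) :=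
  HNNExtension.lift (baseToSurface m) (PresentedGroup.of (0, false)) <| by
    rintro ⟨_, k, rfl⟩
    simp only [stableIso_apply_zpow, map_zpow, ← conj_baseToSurface_of_none, conj_zpow]
    group

theorem ofHNN_toHNN (γ : SurfaceGroup (m + 1)) : ofHNN m (toHNN m γ) = γ := by
  suffices (ofHNN m).comp (toHNN m) = MonoidHom.id _ from DFunLike.congr_fun this γ
  refine PresentedGroup.ext fun ⟨i, s⟩ => ?_
  cases i using Fin.cases <;> cases s <;> rfl

theorem eq_one_of_isOfFinOrder {γ : SurfaceGroup (m + 1)} (hγ : IsOfFinOrder γ) : γ = 1 := by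
  have hinj : Function.Injective (toHNN m) := Function.LeftInverse.injective (ofHNN_toHNN m)
  have h1 : toHNN m γ = 1 := HNNExtension.eq_one_of_isOfFinOrder (stableIso m)
    (fun _ hg => hg.eq_one') (hinj.isOfFinOrder_iff.2 hγ)
  exact hinj (h1.trans (map_one _).symm)

end SurfaceGroup

/-- For `g ≥ 1`, the genus-`g` surface group is torsion-free. -/
theorem surfaceGroup_torsionFree (g : ℕ) (hg : 1 ≤ g)
    (γ : SurfaceGroup g) (n : ℕ) (hn : 1 ≤ n) (h : γ ^ n = 1) : γ = 1 := by
  obtain ⟨m, rfl⟩ := Nat.exists_eq_add_of_le' hg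
  exact SurfaceGroup.eq_one_of_isOfFinOrder m (isOfFinOrder_iff_pow_eq_one.2 ⟨n, hn, h⟩)
end
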